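/- arXiv:1106.3269 — 2 statements merged into one kernel-verified Lean document; each statement's English description precedes it below -/
import Mathlib

section
/- For every ψ̂ ∈ M_0, the unique solution φ̂ of the discrete backward scheme (Ê_φ) with data ψ̂ satisfies, for all 0 ≤ i ≤ I and 0 ≤ j ≤ J, φ̂_{i,j} ≥ exp(−‖u_T‖_∞/σ²) · (1 + Δt ‖f‖_∞/σ²)^{−(I−i)} ≥ ε, where ε := exp(−(‖u_T‖_∞ + ‖f‖_∞ T)/σ²). In particular Φ̂(ψ̂) ∈ M_ε. -/
/-!
Discrete minimum principle. At a grid point where row `i` of `φ̂` is minimal the discrete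
Laplacian is nonnegative, so, as `f ≤ 0`, the scheme gives there
`φ̂_{i+1} ≤ (1 - Δt f / σ²) φ̂_i ≤ (1 + Δt ‖f‖_∞ / σ²) φ̂_i`. Hence each backward step divides
the row minimum by at most `1 + Δt ‖f‖_∞ / σ²`, starting from `exp (-‖u_T‖_∞ / σ²)` at `i = I`,
and `(1 + x / I) ^ I ≤ exp x` bounds the accumulated factor by `exp (‖f‖_∞ T / σ²)`.
-/

noncomputable section

open Real Filter

/-- Sup of `|g|` over `[0,1]` (the sup norm `‖g‖_∞`). -/
def supIcc (g : ℝ → ℝ) : ℝ := ⨆ x : Set.Icc (0:ℝ) 1, |g (x : ℝ)|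

/-- Sup of `|f|` over `[0,1] × ℝ` (the sup norm `‖f‖_∞`). -/
def supF (f : ℝ → ℝ → ℝ) : ℝ := ⨆ p : Set.Icc (0:ℝ) 1 × ℝ, |f (p.1 : ℝ) p.2|

/-- Membership in `M_ε`: all grid entries (for `i ≤ I`, `j ≤ J`) are at least `ε`. -/
def MemM (I J : ℕ) (ε : ℝ) (m : ℕ → ℕ → ℝ) : Prop :=
  ∀ i ≤ I, ∀ j ≤ J, ε ≤ m i j

/-- The discrete backward scheme `(Ê_φ)` with data `ψ`.  Here `Δt = T/I`, `Δx = 1/J`,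
`x_j = j/J`, and the Neumann conventions `m_{i,-1} = m_{i,0}`, `m_{i,J+1} = m_{i,J}`
are realized by the clamped indices `j - 1` (truncated `ℕ`-subtraction) and `min (j+1) J`. -/
def BScheme (T σ : ℝ) (I J : ℕ) (f : ℝ → ℝ → ℝ) (uT : ℝ → ℝ)
    (ψ φ : ℕ → ℕ → ℝ) : Prop :=
  (∀ i < I, ∀ j ≤ J,
      (φ (i+1) j - φ i j) / (T / (I:ℝ))
        + σ^2 / 2 * ((φ i (min (j+1) J) - 2 * φ i j + φ i (j-1)) / (1/(J:ℝ))^2)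
      = -(1/σ^2) * f ((j:ℝ)/(J:ℝ)) (φ i j * ψ i j) * φ i j)
  ∧ ∀ j ≤ J, φ I j = Real.exp (uT ((j:ℝ)/(J:ℝ)) / σ^2)

/-- The discrete forward scheme `(Ê_ψ)` with data `φ` (same conventions as `BScheme`). -/
def FScheme (T σ : ℝ) (I J : ℕ) (f : ℝ → ℝ → ℝ) (m0 : ℝ → ℝ)
    (φ ψ : ℕ → ℕ → ℝ) : Prop :=
  (∀ i < I, ∀ j ≤ J,
      (ψ (i+1) j - ψ i j) / (T / (I:ℝ))
        - σ^2 / 2 * ((ψ (i+1) (min (j+1) J) - 2 * ψ (i+1) j + ψ (i+1) (j-1)) / (1/(J:ℝ))^2)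
      = (1/σ^2) * f ((j:ℝ)/(J:ℝ)) (φ (i+1) j * ψ (i+1) j) * ψ (i+1) j)
  ∧ ∀ j ≤ J, ψ 0 j = m0 ((j:ℝ)/(J:ℝ)) / φ 0 j

/-- Squared grid norm `‖m‖² = max_{0 ≤ i ≤ I} (1/(J+1)) Σ_{j=0}^{J} m_{i,j}²`. -/
def gnormSq (I J : ℕ) (m : ℕ → ℕ → ℝ) : ℝ :=
  (Finset.range (I+1)).sup' (Finset.nonempty_range_iff.mpr (Nat.succ_ne_zero I))
    (fun i => (1/((J:ℝ)+1)) * ∑ j ∈ Finset.range (J+1), (m i j)^2)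

/-- Grid norm `‖m‖`. -/
def gnorm (I J : ℕ) (m : ℕ → ℕ → ℝ) : ℝ := Real.sqrt (gnormSq I J m)

theorem abs_le_supIcc {g : ℝ → ℝ} (hg : ∃ B : ℝ, ∀ x ∈ Set.Icc (0:ℝ) 1, |g x| ≤ B)
    (x : ℝ) (hx : x ∈ Set.Icc (0:ℝ) 1) : |g x| ≤ supIcc g := by
  obtain ⟨B, hB⟩ := hg
  exact le_ciSup (f := fun y : Set.Icc (0:ℝ) 1 => |g y|) ⟨B, by rintro _ ⟨y, rfl⟩; exact hB y y.2⟩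
    ⟨x, hx⟩

theorem abs_le_supF {f : ℝ → ℝ → ℝ} (hf : ∃ B : ℝ, ∀ x ∈ Set.Icc (0:ℝ) 1, ∀ ξ : ℝ, |f x ξ| ≤ B)
    (x : ℝ) (hx : x ∈ Set.Icc (0:ℝ) 1) (ξ : ℝ) : |f x ξ| ≤ supF f := by
  obtain ⟨B, hB⟩ := hf
  exact le_ciSup (f := fun p : Set.Icc (0:ℝ) 1 × ℝ => |f p.1 p.2|)
    ⟨B, by rintro _ ⟨p, rfl⟩; exact hB p.1 p.1.2 p.2⟩ (⟨x, hx⟩, ξ)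

theorem supF_nonneg {f : ℝ → ℝ → ℝ} (hf : ∃ B : ℝ, ∀ x ∈ Set.Icc (0:ℝ) 1, ∀ ξ : ℝ, |f x ξ| ≤ B) :
    0 ≤ supF f :=
  (abs_nonneg _).trans (abs_le_supF hf 0 (Set.left_mem_Icc.mpr zero_le_one) 0)

theorem natCast_div_mem_Icc {j J : ℕ} (hj : j ≤ J) : (j:ℝ) / J ∈ Set.Icc (0:ℝ) 1 :=
  ⟨by positivity, div_le_one_of_le₀ (by exact_mod_cast hj) J.cast_nonneg⟩

theorem one_add_div_pow_le_exp {x : ℝ} (hx : 0 ≤ x) {k n : ℕ} (hk : k ≤ n) :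
    (1 + x / n) ^ k ≤ exp x := by
  rcases n.eq_zero_or_pos with rfl | hn
  · simp [Nat.le_zero.mp hk, one_le_exp hx]
  calc (1 + x / n) ^ k ≤ (1 + x / n) ^ n := pow_le_pow_right₀ (le_add_of_nonneg_right (by positivity)) hk
    _ ≤ exp (x / n) ^ n := pow_le_pow_left₀ (by positivity) (by linarith [add_one_le_exp (x / n)]) n
    _ = exp x := by rw [← exp_nat_mul]; field_simp

theorem exp_sub_le_div_one_add_div_pow (c : ℝ) {x : ℝ} (hx : 0 ≤ x) {k n : ℕ} (hk : k ≤ n) :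
    exp (c - x) ≤ exp c / (1 + x / n) ^ k := by
  rw [exp_sub]
  exact div_le_div_of_nonneg_left (exp_pos c).le (pow_pos (by positivity) k)
    (one_add_div_pow_le_exp hx hk)

theorem laplacian_nonneg_of_forall_le {J j : ℕ} {v : ℕ → ℝ} (hj : j ≤ J)
    (hmin : ∀ k ≤ J, v j ≤ v k) : 0 ≤ v (min (j + 1) J) - 2 * v j + v (j - 1) := by
  linarith [hmin (min (j + 1) J) (min_le_right _ _), hmin (j - 1) (by omega)]

theorem div_le_of_implicit_step {J : ℕ} {Δt D h κ A m : ℝ} {v w g : ℕ → ℝ}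
    (hΔt : 0 < Δt) (hD : 0 ≤ D) (hh : 0 ≤ h) (hκ : 0 ≤ κ) (hm : 0 ≤ m)
    (hg_nonpos : ∀ j ≤ J, g j ≤ 0) (hg_abs : ∀ j ≤ J, |g j| ≤ A)
    (hstep : ∀ j ≤ J, (w j - v j) / Δt + D * ((v (min (j + 1) J) - 2 * v j + v (j - 1)) / h)
      = -κ * g j * v j)
    (hw : ∀ j ≤ J, m ≤ w j) : ∀ j ≤ J, m / (1 + Δt * A * κ) ≤ v j := by
  intro j hj
  obtain ⟨j₀, hj₀, hmin⟩ := Finset.exists_min_image (Finset.range (J + 1)) v ⟨0, by simp⟩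
  replace hj₀ : j₀ ≤ J := Nat.lt_succ_iff.mp (Finset.mem_range.mp hj₀)
  replace hmin : ∀ k ≤ J, v j₀ ≤ v k := fun k hk => hmin k (Finset.mem_range.mpr (by omega))
  have hdiff : (w j₀ - v j₀) / Δt ≤ -κ * g j₀ * v j₀ := by
    have := mul_nonneg hD (div_nonneg (laplacian_nonneg_of_forall_le hj₀ hmin) hh)
    linarith [hstep j₀ hj₀]
  rw [div_le_iff₀ hΔt] at hdiff
  have hgrowth_ge : 1 ≤ 1 - Δt * κ * g j₀ := by
    nlinarith [mul_nonneg hΔt.le hκ, hg_nonpos j₀ hj₀]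
  have hgrowth_le : 1 - Δt * κ * g j₀ ≤ 1 + Δt * A * κ := by
    nlinarith [mul_nonneg hΔt.le hκ, neg_le_of_abs_le (hg_abs j₀ hj₀)]
  calc m / (1 + Δt * A * κ) ≤ m / (1 - Δt * κ * g j₀) :=
        div_le_div_of_nonneg_left hm (by linarith) hgrowth_le
    _ ≤ v j₀ := by
        rw [div_le_iff₀ (by linarith)]
        linarith [hw j₀ hj₀]
    _ ≤ v j := hmin j hj

theorem BScheme.exp_div_pow_le {T σ S F : ℝ} {I J : ℕ} {f uT ψ φ}
    (hT : 0 < T) (hI : 0 < I)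
    (hf_nonpos : ∀ x ∈ Set.Icc (0:ℝ) 1, ∀ ξ : ℝ, f x ξ ≤ 0)
    (hF : ∀ x ∈ Set.Icc (0:ℝ) 1, ∀ ξ : ℝ, |f x ξ| ≤ F)
    (hS : ∀ x ∈ Set.Icc (0:ℝ) 1, |uT x| ≤ S)
    (hφ : BScheme T σ I J f uT ψ φ) :
    ∀ i ≤ I, ∀ j ≤ J, exp (-S / σ^2) / (1 + T / I * F / σ^2) ^ (I - i) ≤ φ i j := by
  intro i hi
  induction hi using Nat.decreasingInduction with
  | self =>
    intro j hj
    rw [Nat.sub_self, pow_zero, div_one, hφ.2 j hj]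
    gcongr
    exact neg_le_of_abs_le (hS _ (natCast_div_mem_Icc hj))
  | of_succ i hi ih =>
    have hF₀ : 0 ≤ F := (abs_nonneg _).trans (hF 0 (Set.left_mem_Icc.mpr zero_le_one) 0)
    rw [show I - i = I - (i + 1) + 1 by omega, pow_succ _ (I - (i + 1)), ← div_div]
    simpa only [mul_one_div] using div_le_of_implicit_step (div_pos hT (Nat.cast_pos.mpr hI))
      (by positivity) (by positivity) (by positivity) (by positivity)
      (fun j hj => hf_nonpos _ (natCast_div_mem_Icc hj) _)
      (fun j hj => hF _ (natCast_div_mem_Icc hj) _) (hφ.1 i hi) ih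

theorem stmt_2_general (T σ : ℝ) (hT : 0 < T)
    (I J : ℕ) (hI : 1 ≤ I)
    (f : ℝ → ℝ → ℝ) (uT : ℝ → ℝ)
    (hfb : ∃ B : ℝ, ∀ x ∈ Set.Icc (0:ℝ) 1, ∀ ξ : ℝ, |f x ξ| ≤ B)
    (hfneg : ∀ x ∈ Set.Icc (0:ℝ) 1, ∀ ξ : ℝ, f x ξ ≤ 0)
    (huTb : ∃ B : ℝ, ∀ x ∈ Set.Icc (0:ℝ) 1, |uT x| ≤ B)
    (ψ : ℕ → ℕ → ℝ)
    (φ : ℕ → ℕ → ℝ) (hφ : BScheme T σ I J f uT ψ φ) :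
    (∀ i ≤ I, ∀ j ≤ J,
        Real.exp (-(supIcc uT) / σ^2) / (1 + (T/(I:ℝ)) * supF f / σ^2) ^ (I - i) ≤ φ i j)
    ∧ (∀ i ≤ I,
        Real.exp (-(supIcc uT + supF f * T) / σ^2)
          ≤ Real.exp (-(supIcc uT) / σ^2) / (1 + (T/(I:ℝ)) * supF f / σ^2) ^ (I - i))
    ∧ MemM I J (Real.exp (-(supIcc uT + supF f * T) / σ^2)) φ := by
  have hlower := hφ.exp_div_pow_le hT hI hfneg (abs_le_supF hfb) (abs_le_supIcc huTb)
  have hdecay : ∀ i ≤ I, exp (-(supIcc uT + supF f * T) / σ^2)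
      ≤ exp (-supIcc uT / σ^2) / (1 + T / I * supF f / σ^2) ^ (I - i) := by
    intro i _
    have hx : 0 ≤ supF f * T / σ^2 := div_nonneg (mul_nonneg (supF_nonneg hfb) hT.le) (sq_nonneg σ)
    convert exp_sub_le_div_one_add_div_pow (-supIcc uT / σ^2) hx (Nat.sub_le I i) using 3 <;> ring
  exact ⟨hlower, hdecay, fun i hi j hj => (hdecay i hi).trans (hlower i hi j hj)⟩

theorem stmt_2 (T σ : ℝ) (hT : 0 < T) (hσ : 0 < σ)
    (I J : ℕ) (hI : 1 ≤ I) (hJ : 1 ≤ J)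
    (f : ℝ → ℝ → ℝ) (uT m0 : ℝ → ℝ)
    (hfc : ∀ x ∈ Set.Icc (0:ℝ) 1, Continuous (f x))
    (hfb : ∃ B : ℝ, ∀ x ∈ Set.Icc (0:ℝ) 1, ∀ ξ : ℝ, |f x ξ| ≤ B)
    (hfneg : ∀ x ∈ Set.Icc (0:ℝ) 1, ∀ ξ : ℝ, f x ξ ≤ 0)
    (hfmono : ∀ x ∈ Set.Icc (0:ℝ) 1, Antitone (f x))
    (huTb : ∃ B : ℝ, ∀ x ∈ Set.Icc (0:ℝ) 1, |uT x| ≤ B)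
    (hm0b : ∃ B : ℝ, ∀ x ∈ Set.Icc (0:ℝ) 1, |m0 x| ≤ B)
    (hm0 : ∀ x ∈ Set.Icc (0:ℝ) 1, 0 ≤ m0 x)
    (ψ : ℕ → ℕ → ℝ) (hψ : MemM I J 0 ψ)
    (φ : ℕ → ℕ → ℝ) (hφ : BScheme T σ I J f uT ψ φ) :
    (∀ i ≤ I, ∀ j ≤ J,
        Real.exp (-(supIcc uT) / σ^2) / (1 + (T/(I:ℝ)) * supF f / σ^2) ^ (I - i) ≤ φ i j)
    ∧ (∀ i ≤ I,
        Real.exp (-(supIcc uT + supF f * T) / σ^2)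
          ≤ Real.exp (-(supIcc uT) / σ^2) / (1 + (T/(I:ℝ)) * supF f / σ^2) ^ (I - i))
    ∧ MemM I J (Real.exp (-(supIcc uT + supF f * T) / σ^2)) φ :=
  stmt_2_general T σ hT I J hI f uT hfb hfneg huTb ψ φ hφ
end
end

section
/- Discrete maximum principle: let ψ̂ ∈ M_0 and ϕ̂ ∈ M be arbitrary grid functions, and suppose φ̂ ∈ M satisfies the linear scheme (φ̂_{i+1,j} − φ̂_{i,j})/Δt + (σ²/2)(φ̂_{i,j+1} − 2φ̂_{i,j} + φ̂_{i,j-1})/(Δx)² = −(1/σ²) f(x_j, ϕ̂_{i,j} ψ̂_{i,j}) φ̂_{i,j} for all 0 ≤ i ≤ I−1 and 0 ≤ j ≤ J, with φ̂_{I,j} ≥ 0 for all j. Then 0 ≤ φ̂_{i,j} ≤ max_{0≤j'≤J} φ̂_{I,j'} for all 0 ≤ i ≤ I and 0 ≤ j ≤ J. -/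
/-!
Each backward time step is an implicit step `u = v + dt·(a·Δu - c·u)` with `a ≥ 0` and
reaction coefficient `c = -f/σ² ≥ 0`. At a minimum of `u` the Neumann Laplacian is `≥ 0`, so a
negative minimum would force `v < 0` there; at a maximum it is `≤ 0`, and `c·u ≥ 0` once `u ≥ 0`,
so `max u ≤ max v`. Backward induction from the terminal row gives the bounds.
-/

noncomputable section

open Real Filter

/-- Second difference with the Neumann conventions `u (-1) = u 0`, `u (J+1) = u J`
(the first via truncated subtraction `0 - 1 = 0`). -/
def neumannLap (J : ℕ) (u : ℕ → ℝ) (j : ℕ) : ℝ :=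
  u (min (j + 1) J) - 2 * u j + u (j - 1)

theorem neumannLap_nonneg_of_forall_le {J j₀ : ℕ} {u : ℕ → ℝ} (hj₀ : j₀ ≤ J)
    (hmin : ∀ j ≤ J, u j₀ ≤ u j) : 0 ≤ neumannLap J u j₀ := by
  have h₁ := hmin (min (j₀ + 1) J) (min_le_right _ _)
  have h₂ := hmin (j₀ - 1) (by omega)
  unfold neumannLap
  linarith

theorem neumannLap_nonpos_of_forall_le {J j₁ : ℕ} {u : ℕ → ℝ} (hj₁ : j₁ ≤ J)
    (hmax : ∀ j ≤ J, u j ≤ u j₁) : neumannLap J u j₁ ≤ 0 := by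
  have h₁ := hmax (min (j₁ + 1) J) (min_le_right _ _)
  have h₂ := hmax (j₁ - 1) (by omega)
  unfold neumannLap
  linarith

/-- `u` is obtained from the later row `v` by one implicit step of
`∂ₜu + a Δu = c u` on the grid `0, …, J`. -/
def IsImplicitBackwardStep (J : ℕ) (dt a : ℝ) (c u v : ℕ → ℝ) : Prop :=
  ∀ j ≤ J, (v j - u j) / dt + a * neumannLap J u j = c j * u j

namespace IsImplicitBackwardStep

variable {J : ℕ} {dt a : ℝ} {c u v : ℕ → ℝ}

theorem nonneg (h : IsImplicitBackwardStep J dt a c u v) (hdt : 0 < dt) (ha : 0 ≤ a)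
    (hc : ∀ j ≤ J, 0 ≤ c j) (hv : ∀ j ≤ J, 0 ≤ v j) {j : ℕ} (hj : j ≤ J) : 0 ≤ u j := by
  obtain ⟨j₀, hj₀, hmin⟩ := (Finset.Iic J).exists_min_image u ⟨J, Finset.mem_Iic.mpr le_rfl⟩
  rw [Finset.mem_Iic] at hj₀
  have hmin' : ∀ j ≤ J, u j₀ ≤ u j := fun j hj => hmin j (Finset.mem_Iic.mpr hj)
  refine le_trans ?_ (hmin' j hj)
  by_contra! hneg
  have hlap : 0 ≤ a * neumannLap J u j₀ :=
    mul_nonneg ha (neumannLap_nonneg_of_forall_le hj₀ hmin')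
  have hreact : c j₀ * u j₀ ≤ 0 := mul_nonpos_of_nonneg_of_nonpos (hc j₀ hj₀) hneg.le
  have hdiff : (v j₀ - u j₀) / dt ≤ 0 := by linarith [h j₀ hj₀]
  rw [div_le_iff₀ hdt, zero_mul] at hdiff
  linarith [hv j₀ hj₀]

theorem le_of_forall_le (h : IsImplicitBackwardStep J dt a c u v) (hdt : 0 < dt) (ha : 0 ≤ a)
    (hc : ∀ j ≤ J, 0 ≤ c j) (hu : ∀ j ≤ J, 0 ≤ u j) {M : ℝ} (hv : ∀ j ≤ J, v j ≤ M)
    {j : ℕ} (hj : j ≤ J) : u j ≤ M := by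
  obtain ⟨j₁, hj₁, hmax⟩ := (Finset.Iic J).exists_max_image u ⟨J, Finset.mem_Iic.mpr le_rfl⟩
  rw [Finset.mem_Iic] at hj₁
  have hmax' : ∀ j ≤ J, u j ≤ u j₁ := fun j hj => hmax j (Finset.mem_Iic.mpr hj)
  refine le_trans (hmax' j hj) ?_
  have hlap : a * neumannLap J u j₁ ≤ 0 :=
    mul_nonpos_of_nonneg_of_nonpos ha (neumannLap_nonpos_of_forall_le hj₁ hmax')
  have hreact : 0 ≤ c j₁ * u j₁ := mul_nonneg (hc j₁ hj₁) (hu j₁ hj₁)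
  have hdiff : 0 ≤ (v j₁ - u j₁) / dt := by linarith [h j₁ hj₁]
  rw [le_div_iff₀ hdt, zero_mul] at hdiff
  linarith [hv j₁ hj₁]

end IsImplicitBackwardStep

theorem stmt_3_general (T σ : ℝ) (hT : 0 < T)
    (I J : ℕ)
    (f : ℝ → ℝ → ℝ)
    (hfneg : ∀ x ∈ Set.Icc (0:ℝ) 1, ∀ ξ : ℝ, f x ξ ≤ 0)
    (ψ : ℕ → ℕ → ℝ)
    (ϕ φ : ℕ → ℕ → ℝ)
    (hsch : ∀ i < I, ∀ j ≤ J,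
      (φ (i+1) j - φ i j) / (T / (I:ℝ))
        + σ^2 / 2 * ((φ i (min (j+1) J) - 2 * φ i j + φ i (j-1)) / (1/(J:ℝ))^2)
      = -(1/σ^2) * f ((j:ℝ)/(J:ℝ)) (ϕ i j * ψ i j) * φ i j)
    (hterm : ∀ j ≤ J, 0 ≤ φ I j) :
    ∀ i ≤ I, ∀ j ≤ J, 0 ≤ φ i j ∧
      φ i j ≤ (Finset.range (J+1)).sup'
        (Finset.nonempty_range_iff.mpr (Nat.succ_ne_zero J)) (fun j' => φ I j') := by
  have hgrid : ∀ j ≤ J, (j:ℝ)/J ∈ Set.Icc (0:ℝ) 1 := fun j hj =>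
    ⟨by positivity, div_le_one_of_le₀ (by exact_mod_cast hj) (Nat.cast_nonneg J)⟩
  intro i hi
  induction hi using Nat.decreasingInduction with
  | self => exact fun j hj => ⟨hterm j hj, Finset.le_sup' _ (by simpa [Nat.lt_succ_iff])⟩
  | of_succ i hi ih =>
    have hstep : IsImplicitBackwardStep J (T / I) (σ ^ 2 / 2 / (1 / (J:ℝ)) ^ 2)
        (fun j => -(1/σ^2) * f ((j:ℝ)/(J:ℝ)) (ϕ i j * ψ i j)) (φ i) (φ (i+1)) :=
      fun j hj => by unfold neumannLap; linear_combination hsch i hi j hj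
    have hdt : 0 < T / I := div_pos hT (by exact_mod_cast (Nat.zero_lt_of_lt hi))
    have hc : ∀ j ≤ J, 0 ≤ -(1/σ^2) * f ((j:ℝ)/(J:ℝ)) (ϕ i j * ψ i j) := fun j hj =>
      mul_nonneg_of_nonpos_of_nonpos (by simp only [neg_nonpos]; positivity)
        (hfneg _ (hgrid j hj) _)
    have hnonneg j (hj : j ≤ J) : 0 ≤ φ i j :=
      hstep.nonneg hdt (by positivity) hc (fun j hj => (ih j hj).1) hj
    exact fun j hj => ⟨hnonneg j hj,
      hstep.le_of_forall_le hdt (by positivity) hc hnonneg (fun j hj => (ih j hj).2) hj⟩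

theorem stmt_3 (T σ : ℝ) (hT : 0 < T) (hσ : 0 < σ)
    (I J : ℕ) (hI : 1 ≤ I) (hJ : 1 ≤ J)
    (f : ℝ → ℝ → ℝ)
    (hfc : ∀ x ∈ Set.Icc (0:ℝ) 1, Continuous (f x))
    (hfb : ∃ B : ℝ, ∀ x ∈ Set.Icc (0:ℝ) 1, ∀ ξ : ℝ, |f x ξ| ≤ B)
    (hfneg : ∀ x ∈ Set.Icc (0:ℝ) 1, ∀ ξ : ℝ, f x ξ ≤ 0)
    (hfmono : ∀ x ∈ Set.Icc (0:ℝ) 1, Antitone (f x))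
    (ψ : ℕ → ℕ → ℝ) (hψ : MemM I J 0 ψ)
    (ϕ φ : ℕ → ℕ → ℝ)
    (hsch : ∀ i < I, ∀ j ≤ J,
      (φ (i+1) j - φ i j) / (T / (I:ℝ))
        + σ^2 / 2 * ((φ i (min (j+1) J) - 2 * φ i j + φ i (j-1)) / (1/(J:ℝ))^2)
      = -(1/σ^2) * f ((j:ℝ)/(J:ℝ)) (ϕ i j * ψ i j) * φ i j)
    (hterm : ∀ j ≤ J, 0 ≤ φ I j) :
    ∀ i ≤ I, ∀ j ≤ J, 0 ≤ φ i j ∧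
      φ i j ≤ (Finset.range (J+1)).sup'
        (Finset.nonempty_range_iff.mpr (Nat.succ_ne_zero J)) (fun j' => φ I j') :=
  stmt_3_general T σ hT I J f hfneg ψ ϕ φ hsch hterm
end
end
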